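/- Completeness of standard SLD resolution with respect to the inductive declarative semantics: let (P,coP) be a logic program with coclauses, A a finite atom, E a finite set of equations, and σ ∈ sol(E) a ground substitution with Var(A) ⊆ dom(σ). If Aσ ∈ Ind(P ∪ coP), then there exist a finite set of equations E' and θ ∈ sol(E') such that P∪coP;∅ ⊢ ∅ : ⟨A | E⟩ ⇒ E' is derivable and σ ⊑ θ. -/

import Mathlib

/- Framework: flexible coinductive logic programming (logic programs with coclauses).
   Terms are possibly infinite trees, modelled as M-types of a polynomial functor. -/

namespace FlexLP

/-- A first-order signature: function symbols and predicate symbols, each with an arity.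
Variables are represented by natural numbers (a countably infinite set). -/
structure Sig where
  Func : Type
  far : Func → ℕ
  Pred : Type
  par : Pred → ℕ

/-- Polynomial functor whose M-type is the type of possibly infinite terms:
nodes are labelled by function symbols (with `far` children) or variables (no children). -/
def TermP (S : Sig) : PFunctor :=
  ⟨S.Func ⊕ ℕ, fun l => Fin (match l with | Sum.inl f => S.far f | Sum.inr _ => 0)⟩

/-- Possibly infinite terms over the signature `S`. -/
def Term (S : Sig) : Type := (TermP S).M

/-- The term consisting of a single variable `x`. -/
def Term.var (S : Sig) (x : ℕ) : Term S :=
  PFunctor.M.mk ⟨Sum.inr x, fun i => i.elim0⟩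

/-- The variable `x` occurs in the term `t`. -/
inductive Term.Occurs (S : Sig) (x : ℕ) : Term S → Prop
  | root (t : Term S) (h : (PFunctor.M.dest t).1 = Sum.inr x) : Term.Occurs S x t
  | child (t : Term S) (i : (TermP S).B (PFunctor.M.dest t).1)
      (h : Term.Occurs S x ((PFunctor.M.dest t).2 i)) : Term.Occurs S x t

/-- The term `t` is finite (syntactic): all its branches are finite. -/
inductive Term.IsFinite (S : Sig) : Term S → Prop
  | mk (t : Term S) (h : ∀ i, Term.IsFinite S ((PFunctor.M.dest t).2 i)) : Term.IsFinite S t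

/-- The term `t` is ground: no variable occurs in it. -/
def Term.Ground (S : Sig) (t : Term S) : Prop := ∀ x, ¬ Term.Occurs S x t

/-- A substitution: a map from a finite set of variables to terms. -/
structure Subst (S : Sig) where
  toFun : ℕ → Option (Term S)
  finDom : {x | (toFun x).isSome}.Finite

/-- Domain of a substitution. -/
def Subst.dom {S : Sig} (σ : Subst S) : Set ℕ := {x | (σ.toFun x).isSome}

/-- A substitution is ground if all its values are ground terms. -/
def Subst.Ground {S : Sig} (σ : Subst S) : Prop :=
  ∀ x t, σ.toFun x = some t → Term.Ground S t

/-- `σ ⊑ θ` : `dom σ ⊆ dom θ` and the two substitutions agree on `dom σ`. -/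
def Subst.le {S : Sig} (σ θ : Subst S) : Prop :=
  ∀ x t, σ.toFun x = some t → θ.toFun x = some t

/-- One step of (simultaneous) substitution application, as a coalgebra.
The boolean flag records whether we are still in the original term (`true`)
or inside a substituted term (`false`). -/
def substStep (S : Sig) (σ : Subst S) : Term S × Bool → (TermP S).Obj (Term S × Bool) :=
  fun p =>
    match PFunctor.M.dest p.1, p.2 with
    | ⟨Sum.inl f, ch⟩, b => ⟨Sum.inl f, fun i => (ch i, b)⟩
    | ⟨Sum.inr x, ch⟩, true =>
        match σ.toFun x with
        | some s =>
            match PFunctor.M.dest s with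
            | ⟨l, ch'⟩ => ⟨l, fun i => (ch' i, false)⟩
        | none => ⟨Sum.inr x, fun i => (ch i, true)⟩
    | ⟨Sum.inr x, ch⟩, false => ⟨Sum.inr x, fun i => (ch i, false)⟩

/-- Application `tσ` of a substitution to a term. -/
def Term.subst {S : Sig} (t : Term S) (σ : Subst S) : Term S :=
  PFunctor.M.corec (substStep S σ) (t, true)

/-- Atoms: a predicate symbol applied to terms (a possibly infinite tree whose
root is labelled by a predicate symbol). -/
structure Atom (S : Sig) where
  pred : S.Pred
  args : Fin (S.par pred) → Term S

/-- The variable `x` occurs in the atom `A`. -/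
def Atom.Occurs {S : Sig} (x : ℕ) (A : Atom S) : Prop := ∃ i, Term.Occurs S x (A.args i)

/-- Ground atoms. The set of all ground atoms is the complete Herbrand base. -/
def Atom.Ground {S : Sig} (A : Atom S) : Prop := ∀ i, Term.Ground S (A.args i)

/-- Finite (syntactic) atoms. -/
def Atom.IsFinite {S : Sig} (A : Atom S) : Prop := ∀ i, Term.IsFinite S (A.args i)

/-- Application of a substitution to an atom. -/
def Atom.subst {S : Sig} (A : Atom S) (σ : Subst S) : Atom S :=
  ⟨A.pred, fun i => Term.subst (A.args i) σ⟩

/-- A (definite) clause `head :- body`, made of finite atoms. -/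
structure Clause (S : Sig) where
  head : Atom S
  body : List (Atom S)
  finHead : head.IsFinite
  finBody : ∀ B ∈ body, B.IsFinite

/-- Variables occurring in a clause. -/
def clauseVars {S : Sig} (C : Clause S) : Set ℕ :=
  {x | Atom.Occurs x C.head ∨ ∃ B ∈ C.body, Atom.Occurs x B}

/-- `Ground P` : the ground instances of clauses of `P`, viewed as inference rules
(pairs premises/conclusion) on the complete Herbrand base. -/
def GroundInst {S : Sig} (P : Set (Clause S)) : Set (Atom S × List (Atom S)) :=
  {r | ∃ C ∈ P, ∃ σ : Subst S, σ.Ground ∧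
        r.1 = C.head.subst σ ∧ r.2 = C.body.map (fun B => B.subst σ) ∧
        r.1.Ground ∧ ∀ B ∈ r.2, B.Ground}

/-- The (one step) inference operator `T_P` associated to a program. -/
def TP {S : Sig} (P : Set (Clause S)) (I : Set (Atom S)) : Set (Atom S) :=
  {A | ∃ r ∈ GroundInst P, r.1 = A ∧ ∀ B ∈ r.2, B ∈ I}

/-- `I` is a model of `P`. -/
def IsModel {S : Sig} (P : Set (Clause S)) (I : Set (Atom S)) : Prop := TP P I ⊆ I

/-- `I` is a comodel of `P`. -/
def IsComodel {S : Sig} (P : Set (Clause S)) (I : Set (Atom S)) : Prop := I ⊆ TP P I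

/-- `Ind P` : the inductive declarative semantics, i.e. the least model of `P`. -/
def Ind {S : Sig} (P : Set (Clause S)) : Set (Atom S) := ⋂₀ {I | IsModel P I}

/-- `FlexCo (P,coP)` : the declarative semantics of a logic program with coclauses,
i.e. the largest comodel of `P` included in `Ind (P ∪ coP)` (union of all such comodels). -/
def FlexCo {S : Sig} (P coP : Set (Clause S)) : Set (Atom S) :=
  ⋃₀ {I | IsComodel P I ∧ I ⊆ Ind (P ∪ coP)}

/-- `FlexReg (P,coP)` : the regular declarative semantics, i.e. the union of all
finite comodels of `P` included in `Ind (P ∪ coP)`. -/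
def FlexReg {S : Sig} (P coP : Set (Clause S)) : Set (Atom S) :=
  ⋃₀ {I | I.Finite ∧ IsComodel P I ∧ I ⊆ Ind (P ∪ coP)}

/-- An equation `s ≐ t` between terms. -/
abbrev Eqn (S : Sig) := Term S × Term S

/-- Variables occurring in a set of equations. -/
def eqnVars {S : Sig} (E : Set (Eqn S)) : Set ℕ :=
  {x | ∃ e ∈ E, Term.Occurs S x e.1 ∨ Term.Occurs S x e.2}

/-- `E` is a finite set of equations between finite (syntactic) terms. -/
def EqnSetFin {S : Sig} (E : Set (Eqn S)) : Prop :=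
  E.Finite ∧ ∀ e ∈ E, Term.IsFinite S e.1 ∧ Term.IsFinite S e.2

/-- `sol E` : the set of solutions of `E`, i.e. ground substitutions defined on all
variables of `E` that unify all the equations in `E`. -/
def sol {S : Sig} (E : Set (Eqn S)) : Set (Subst S) :=
  {σ | σ.Ground ∧ eqnVars E ⊆ σ.dom ∧ ∀ e ∈ E, e.1.subst σ = e.2.subst σ}

/-- `E` is solvable. -/
def Solvable {S : Sig} (E : Set (Eqn S)) : Prop := (sol E).Nonempty

/-- `eqs(A,B)` : the equations between the corresponding arguments of two atoms
with the same predicate symbol. -/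
def atomEqs {S : Sig} (A B : Atom S) : Set (Eqn S) :=
  {e | ∃ (h : A.pred = B.pred) (i : Fin (S.par A.pred)),
        e = (A.args i, B.args (Fin.cast (congrArg S.par h) i))}

/-- Variables occurring in a set of atoms. -/
def atomsVars {S : Sig} (H : Set (Atom S)) : Set ℕ := {x | ∃ A ∈ H, Atom.Occurs x A}

/-- Variables occurring in a sequence of atoms (a goal). -/
def goalVars {S : Sig} (G : List (Atom S)) : Set ℕ := {x | ∃ A ∈ G, Atom.Occurs x A}

/-- `ρ` is a renaming of the variables of clause `C` to fresh variables avoiding `avoid`: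
it maps (injectively) every variable of `C` to a variable not in `avoid`. -/
def FreshRenamingFor {S : Sig} (ρ : Subst S) (C : Clause S) (avoid : Set ℕ) : Prop :=
  (∀ x t, ρ.toFun x = some t → ∃ y, t = Term.var S y ∧ y ∉ avoid) ∧
  clauseVars C ⊆ ρ.dom ∧
  (∀ x y, ρ.toFun x = ρ.toFun y → (ρ.toFun x).isSome → x = y)

/-- The big-step operational semantics judgment `P;coP ⊢ H : ⟨G | E⟩ ⇒ E'` of
flexible coSLD resolution, inductively defined by the rules (empty), (co-hyp), (step). -/
inductive OpSem (S : Sig) :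
    Set (Clause S) → Set (Clause S) → Set (Atom S) → List (Atom S) →
      Set (Eqn S) → Set (Eqn S) → Prop
  | empty (P coP : Set (Clause S)) (H : Set (Atom S)) (E : Set (Eqn S)) :
      OpSem S P coP H [] E E
  | cohyp {P coP : Set (Clause S)} {H : Set (Atom S)} {G1 G2 : List (Atom S)}
      {A B : Atom S} {E1 E2 E3 : Set (Eqn S)} :
      coP ≠ ∅ → B ∈ H → A.pred = B.pred →
      Solvable (E1 ∪ atomEqs A B) →
      OpSem S (P ∪ coP) ∅ ∅ [A] (E1 ∪ atomEqs A B) E2 →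
      OpSem S P coP H (G1 ++ G2) E2 E3 →
      OpSem S P coP H (G1 ++ A :: G2) E1 E3
  | step {P coP : Set (Clause S)} {H : Set (Atom S)} {G1 G2 : List (Atom S)}
      {A : Atom S} {E1 E2 E3 : Set (Eqn S)} (C : Clause S) (ρ : Subst S) :
      C ∈ P →
      FreshRenamingFor ρ C (eqnVars E1 ∪ atomsVars H ∪ goalVars (G1 ++ A :: G2)) →
      A.pred = C.head.pred →
      Solvable (E1 ∪ atomEqs A (C.head.subst ρ)) →
      OpSem S P coP (H ∪ {A}) (C.body.map (fun B => B.subst ρ))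
        (E1 ∪ atomEqs A (C.head.subst ρ)) E2 →
      OpSem S P coP H (G1 ++ G2) E2 E3 →
      OpSem S P coP H (G1 ++ A :: G2) E1 E3

/-- `Ans(G,E,I)` : the set of answers to the goal `⟨G | E⟩` correct in the
interpretation `I`. -/
def Ans {S : Sig} (G : List (Atom S)) (E : Set (Eqn S)) (I : Set (Atom S)) :
    Set (Subst S) :=
  {σ | σ ∈ sol E ∧ goalVars G ⊆ σ.dom ∧ ∀ A ∈ G, A.subst σ ∈ I}

/-- The inductive interpretation of the inference system `Loop(P,coP)`, whose judgments
`H ⊢ A` pair a ground atom with a set of ground atoms (circular hypotheses);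
rules: (hp) `H ⊢ A` if `A ∈ H` and `A ∈ Ind (P ∪ coP)`;
(rule) from `H∪{A} ⊢ B` for every premise `B` of a ground instance of a clause of `P`
with conclusion `A`, infer `H ⊢ A`. -/
inductive LoopInd {S : Sig} (P coP : Set (Clause S)) : Set (Atom S) → Atom S → Prop
  | hp {H : Set (Atom S)} {A : Atom S} :
      A ∈ H → A ∈ Ind (P ∪ coP) → LoopInd P coP H A
  | rule {H : Set (Atom S)} {A : Atom S} (r : Atom S × List (Atom S)) :
      r ∈ GroundInst P → r.1 = A →
      (∀ B ∈ r.2, LoopInd P coP (H ∪ {A}) B) →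
      LoopInd P coP H A

/-
Every atom of `Ind P` lies in some iterate `T_P^n(∅)`: the union of the iterates is a model
because clause bodies are finite. By induction on `n`, SLD resolution succeeds, with an answer
extending `σ`, on every goal whose instance under the solution `σ` lies in `T_P^n(∅)`. For the
first atom `A`, take a ground instance `Cσc` of a clause witnessing `Aσ ∈ T_P(T_P^(n-1)(∅))`,
rename `C` apart by shifting its variables above every variable of `σ`, and let `θ` extend `σ`
by `σc` on the shifted variables. Then `θ` solves the equations with the renamed head, the
renamed body instantiated by `θ` is the body of `Cσc`, which lies at level `n - 1`, and the
remaining atoms are resolved at level `n` starting from the answer obtained for the body.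
-/

section Completeness

variable {S : Sig}

namespace Term

def func (f : S.Func) (ch : Fin (S.far f) → Term S) : Term S :=
  PFunctor.M.mk ⟨Sum.inl f, ch⟩

theorem ext_dest {a b : Term S} (h : PFunctor.M.dest a = PFunctor.M.dest b) : a = b := by
  rw [← PFunctor.M.mk_dest a, ← PFunctor.M.mk_dest b, h]

theorem var_injective : Function.Injective (Term.var S) := fun _ _ h =>
  Sum.inr.inj (congrArg (fun t => (PFunctor.M.dest t).1) h)

theorem mk_inr_eq_var (x : ℕ) (ch : (TermP S).B (Sum.inr x) → Term S) :
    PFunctor.M.mk ⟨Sum.inr x, ch⟩ = Term.var S x :=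
  congrArg PFunctor.M.mk (Sigma.ext rfl (heq_of_eq (funext fun i => i.elim0)))

theorem occurs_mk_iff {l : S.Func ⊕ ℕ} {ch : (TermP S).B l → Term S} {x : ℕ} :
    Occurs S x (PFunctor.M.mk ⟨l, ch⟩) ↔ l = Sum.inr x ∨ ∃ i, Occurs S x (ch i) :=
  ⟨fun | .root _ h => .inl h | .child _ i h => .inr ⟨i, h⟩,
   fun | .inl h => .root _ h | .inr ⟨i, h⟩ => .child _ i h⟩

theorem occurs_var_iff {x y : ℕ} : Occurs S y (Term.var S x) ↔ y = x := by
  refine occurs_mk_iff.trans ⟨?_, fun h => .inl (h ▸ rfl)⟩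
  rintro (h | ⟨i, -⟩)
  · exact (Sum.inr.inj h).symm
  · exact i.elim0

theorem occurs_func_iff {f : S.Func} {ch : Fin (S.far f) → Term S} {x : ℕ} :
    Occurs S x (Term.func f ch) ↔ ∃ i, Occurs S x (ch i) :=
  occurs_mk_iff.trans (or_iff_right Sum.inl_ne_inr)

theorem isFinite_var (x : ℕ) : IsFinite S (Term.var S x) :=
  .mk _ fun i => i.elim0

@[elab_as_elim]
theorem IsFinite.induction_on {motive : Term S → Prop} {t : Term S} (ht : IsFinite S t)
    (var : ∀ x, motive (Term.var S x))
    (func : ∀ f ch, (∀ i, motive (ch i)) → motive (Term.func f ch)) : motive t := by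
  induction ht with
  | mk t _ ih =>
    rw [← PFunctor.M.mk_dest t]
    generalize PFunctor.M.dest t = d at ih
    rcases d with ⟨f | x, ch⟩
    · exact func f ch ih
    · exact mk_inr_eq_var x ch ▸ var x

theorem vars_finite {t : Term S} (ht : IsFinite S t) : {x | Occurs S x t}.Finite := by
  refine ht.induction_on (fun x => ?_) fun f ch ih => ?_
  · exact (Set.finite_singleton x).subset fun y hy => occurs_var_iff.mp hy
  · refine (Set.finite_iUnion ih).subset fun y hy => ?_
    exact Set.mem_iUnion.mpr (occurs_func_iff.mp hy)

def CommutesWithFunc (Φ : Term S → Term S) : Prop :=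
  ∀ f ch, Φ (Term.func f ch) = Term.func f fun i => Φ (ch i)

theorem IsFinite.eq_of_forall_var {Φ Ψ : Term S → Term S} (hΦ : CommutesWithFunc Φ)
    (hΨ : CommutesWithFunc Ψ) {t : Term S} (ht : IsFinite S t)
    (hvar : ∀ x, Occurs S x t → Φ (Term.var S x) = Ψ (Term.var S x)) : Φ t = Ψ t := by
  revert hvar
  refine ht.induction_on (fun x hvar => hvar x (occurs_var_iff.mpr rfl)) fun f ch ih hvar => ?_
  rw [hΦ, hΨ]
  congr 2
  exact funext fun i => ih i fun x hx => hvar x (occurs_func_iff.mpr ⟨i, hx⟩)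

theorem subst_func (σ : Subst S) (f : S.Func) (ch : Fin (S.far f) → Term S) :
    subst (Term.func f ch) σ = Term.func f fun i => (ch i).subst σ := by
  apply ext_dest
  unfold subst
  rw [PFunctor.M.dest_corec]
  simp only [substStep]
  rfl

theorem commutesWithFunc_subst (σ : Subst S) : CommutesWithFunc (subst · σ) :=
  subst_func σ

theorem corec_substStep_false (σ : Subst S) (t : Term S) :
    PFunctor.M.corec (substStep S σ) (t, false) = t := by
  refine PFunctor.M.bisim (fun a b => a = PFunctor.M.corec (substStep S σ) (b, false)) ?_
    _ _ rfl
  rintro x y rfl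
  rcases e : PFunctor.M.dest y with ⟨l, ch⟩
  refine ⟨l, fun i => PFunctor.M.corec (substStep S σ) (ch i, false), ch, ?_, rfl, fun i => rfl⟩
  rw [PFunctor.M.dest_corec]
  show (TermP S).map _ (substStep S σ (y, false)) = _
  rw [substStep, e]
  cases l <;> rfl

theorem subst_var_of_some {σ : Subst S} {x : ℕ} {s : Term S} (h : σ.toFun x = some s) :
    (Term.var S x).subst σ = s := by
  apply ext_dest
  rw [subst, PFunctor.M.dest_corec]
  show (TermP S).map _ (match σ.toFun x with
      | some s => match PFunctor.M.dest s with | ⟨l, ch'⟩ => ⟨l, fun i => (ch' i, false)⟩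
      | none => ⟨Sum.inr x, fun i => (Fin.elim0 i, true)⟩) = _
  rw [h]
  show (TermP S).map _
    (match PFunctor.M.dest s with | ⟨l, ch'⟩ => ⟨l, fun i => (ch' i, false)⟩) = _
  rcases PFunctor.M.dest s with ⟨l, ch⟩
  show (⟨l, fun i => PFunctor.M.corec (substStep S σ) (ch i, false)⟩ : (TermP S).Obj _) = ⟨l, ch⟩
  congr 1
  exact funext fun i => corec_substStep_false σ (ch i)

theorem subst_var_of_none {σ : Subst S} {x : ℕ} (h : σ.toFun x = none) :
    (Term.var S x).subst σ = Term.var S x := by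
  apply ext_dest
  rw [subst, PFunctor.M.dest_corec]
  show (TermP S).map _ (match σ.toFun x with
      | some s => match PFunctor.M.dest s with | ⟨l, ch'⟩ => ⟨l, fun i => (ch' i, false)⟩
      | none => ⟨Sum.inr x, fun i => (Fin.elim0 i, true)⟩) = _
  rw [h]
  show (⟨Sum.inr x, fun i => PFunctor.M.corec (substStep S σ) ((Fin.elim0 i : Term S), true)⟩
    : (TermP S).Obj _) = _
  congr 1
  exact funext fun i => i.elim0

theorem subst_eq_of_le {σ θ : Subst S} (hle : σ.le θ) {t : Term S} (ht : IsFinite S t)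
    (hdom : ∀ x, Occurs S x t → x ∈ σ.dom) : t.subst θ = t.subst σ := by
  refine ht.eq_of_forall_var (commutesWithFunc_subst θ) (commutesWithFunc_subst σ) fun x hx => ?_
  obtain ⟨s, hs⟩ := Option.isSome_iff_exists.mp (hdom x hx)
  rw [subst_var_of_some hs, subst_var_of_some (hle x s hs)]

theorem subst_subst_eq {ρ θ τ : Subst S} {t : Term S} (ht : IsFinite S t)
    (hvar : ∀ x, Occurs S x t → ((Term.var S x).subst ρ).subst θ = (Term.var S x).subst τ) :
    (t.subst ρ).subst θ = t.subst τ :=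
  ht.eq_of_forall_var (Φ := fun t => (t.subst ρ).subst θ)
    (fun f ch => by dsimp only; rw [subst_func, subst_func]) (commutesWithFunc_subst τ) hvar

theorem isFinite_subst {σ : Subst S} (hσ : ∀ x s, σ.toFun x = some s → IsFinite S s)
    {t : Term S} (ht : IsFinite S t) : IsFinite S (t.subst σ) := by
  refine ht.induction_on (fun x => ?_) fun f ch ih => ?_
  · cases e : σ.toFun x with
    | none => rw [subst_var_of_none e]; exact isFinite_var x
    | some s => rw [subst_var_of_some e]; exact hσ x s e
  · rw [subst_func]
    exact .mk _ ih

theorem occurs_subst_of_none {σ : Subst S} {x : ℕ} (hx : σ.toFun x = none) {t : Term S}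
    (ht : IsFinite S t) (hocc : Occurs S x t) : Occurs S x (t.subst σ) := by
  revert hocc
  refine ht.induction_on (fun y hy => ?_) fun f ch ih hocc => ?_
  · obtain rfl := occurs_var_iff.mp hy
    rwa [subst_var_of_none hx]
  · rw [subst_func, occurs_func_iff]
    obtain ⟨i, hi⟩ := occurs_func_iff.mp hocc
    exact ⟨i, ih i hi⟩

theorem ground_subst {σ : Subst S} (hσ : σ.Ground) {t : Term S} (ht : IsFinite S t)
    (hdom : ∀ x, Occurs S x t → x ∈ σ.dom) : Ground S (t.subst σ) := by
  revert hdom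
  refine ht.induction_on (fun x hdom => ?_) fun f ch ih hdom => ?_
  · obtain ⟨s, hs⟩ := Option.isSome_iff_exists.mp (hdom x (occurs_var_iff.mpr rfl))
    rw [subst_var_of_some hs]
    exact hσ x s hs
  · intro y hy
    rw [subst_func, occurs_func_iff] at hy
    obtain ⟨i, hi⟩ := hy
    exact ih i (fun x hx => hdom x (occurs_func_iff.mpr ⟨i, hx⟩)) y hi

theorem mem_dom_of_ground_subst {σ : Subst S} {t : Term S} (ht : IsFinite S t)
    (hground : Ground S (t.subst σ)) {x : ℕ} (hx : Occurs S x t) : x ∈ σ.dom := by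
  by_contra h
  exact hground x (occurs_subst_of_none (Option.not_isSome_iff_eq_none.mp h) ht hx)

end Term

theorem Subst.le.trans {σ θ τ : Subst S} (h₁ : σ.le θ) (h₂ : θ.le τ) : σ.le τ :=
  fun x t h => h₂ x t (h₁ x t h)

theorem Subst.le.dom_subset {σ θ : Subst S} (h : σ.le θ) : σ.dom ⊆ θ.dom := fun x hx =>
  have ⟨t, ht⟩ := Option.isSome_iff_exists.mp hx
  Option.isSome_iff_exists.mpr ⟨t, h x t ht⟩

namespace Atom

theorem args_eq_of_eq {A B : Atom S} (h : A = B) (hp : A.pred = B.pred)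
    (i : Fin (S.par A.pred)) : A.args i = B.args (Fin.cast (congrArg S.par hp) i) := by
  subst h
  rfl

theorem vars_finite {A : Atom S} (hA : A.IsFinite) : {x | A.Occurs x}.Finite :=
  (Set.finite_iUnion fun i => Term.vars_finite (hA i)).subset fun _ ⟨i, hx⟩ =>
    Set.mem_iUnion.mpr ⟨i, hx⟩

theorem subst_eq_of_le {σ θ : Subst S} (hle : σ.le θ) {A : Atom S} (hA : A.IsFinite)
    (hdom : ∀ x, A.Occurs x → x ∈ σ.dom) : A.subst θ = A.subst σ :=
  congrArg (Atom.mk A.pred) <| funext fun i =>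
    Term.subst_eq_of_le hle (hA i) fun x hx => hdom x ⟨i, hx⟩

theorem isFinite_subst {σ : Subst S} (hσ : ∀ x s, σ.toFun x = some s → Term.IsFinite S s)
    {A : Atom S} (hA : A.IsFinite) : (A.subst σ).IsFinite :=
  fun i => Term.isFinite_subst hσ (hA i)

theorem subst_subst_eq {ρ θ τ : Subst S} {A : Atom S} (hA : A.IsFinite)
    (hvar : ∀ x, A.Occurs x → ((Term.var S x).subst ρ).subst θ = (Term.var S x).subst τ) :
    (A.subst ρ).subst θ = A.subst τ :=
  congrArg (Atom.mk A.pred) <| funext fun i =>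
    Term.subst_subst_eq (hA i) fun x hx => hvar x ⟨i, hx⟩

theorem ground_subst {σ : Subst S} (hσ : σ.Ground) {A : Atom S} (hA : A.IsFinite)
    (hdom : ∀ x, A.Occurs x → x ∈ σ.dom) : (A.subst σ).Ground :=
  fun i => Term.ground_subst hσ (hA i) fun x hx => hdom x ⟨i, hx⟩

theorem mem_dom_of_ground_subst {σ : Subst S} {A : Atom S} (hA : A.IsFinite)
    (hground : (A.subst σ).Ground) {x : ℕ} (hx : A.Occurs x) : x ∈ σ.dom :=
  have ⟨i, hi⟩ := hx
  Term.mem_dom_of_ground_subst (hA i) (hground i) hi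

end Atom

theorem clauseVars_finite (C : Clause S) : (clauseVars C).Finite := by
  refine ((Atom.vars_finite C.finHead).union
    (C.body.finite_toSet.biUnion fun B hB => Atom.vars_finite (C.finBody B hB))).subset ?_
  rintro x (hx | ⟨B, hB, hx⟩)
  · exact .inl hx
  · exact .inr (Set.mem_biUnion hB hx)

theorem atomEqs_finite (A B : Atom S) : (atomEqs A B).Finite := by
  by_cases h : A.pred = B.pred
  · refine (Set.finite_range fun i : Fin (S.par A.pred) =>
      ((A.args i, B.args (Fin.cast (congrArg S.par h) i)) : Eqn S)).subset ?_
    rintro e ⟨-, i, rfl⟩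
    exact ⟨i, rfl⟩
  · exact Set.finite_empty.subset fun e ⟨h', _⟩ => absurd h' h

theorem EqnSetFin.union_atomEqs {E : Set (Eqn S)} (hE : EqnSetFin E) {A B : Atom S}
    (hA : A.IsFinite) (hB : B.IsFinite) : EqnSetFin (E ∪ atomEqs A B) := by
  refine ⟨hE.1.union (atomEqs_finite A B), ?_⟩
  rintro e (he | ⟨-, i, rfl⟩)
  · exact hE.2 e he
  · exact ⟨hA i, hB _⟩

theorem mem_sol_of_le {E : Set (Eqn S)} (hE : EqnSetFin E) {σ θ : Subst S} (hσ : σ ∈ sol E)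
    (hle : σ.le θ) (hθ : θ.Ground) : θ ∈ sol E := by
  refine ⟨hθ, hσ.2.1.trans hle.dom_subset, fun e he => ?_⟩
  rw [Term.subst_eq_of_le hle (hE.2 e he).1 fun x hx => hσ.2.1 ⟨e, he, .inl hx⟩,
    Term.subst_eq_of_le hle (hE.2 e he).2 fun x hx => hσ.2.1 ⟨e, he, .inr hx⟩]
  exact hσ.2.2 e he

theorem mem_sol_union_atomEqs {E : Set (Eqn S)} {θ : Subst S} (hθ : θ ∈ sol E) {A B : Atom S}
    (hA : ∀ x, A.Occurs x → x ∈ θ.dom) (hB : ∀ x, B.Occurs x → x ∈ θ.dom)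
    (hAB : A.subst θ = B.subst θ) : θ ∈ sol (E ∪ atomEqs A B) := by
  refine ⟨hθ.1, ?_, ?_⟩
  · rintro x ⟨e, he | ⟨_, i, rfl⟩, hx⟩
    · exact hθ.2.1 ⟨e, he, hx⟩
    · rcases hx with hx | hx
      exacts [hA x ⟨i, hx⟩, hB x ⟨_, hx⟩]
  · rintro e (he | ⟨hp, i, rfl⟩)
    · exact hθ.2.2 e he
    · exact Atom.args_eq_of_eq hAB hp i

theorem FreshRenamingFor.mono {ρ : Subst S} {C : Clause S} {V W : Set ℕ}
    (h : FreshRenamingFor ρ C V) (hWV : W ⊆ V) : FreshRenamingFor ρ C W :=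
  ⟨fun x t hx => have ⟨y, hy, hyV⟩ := h.1 x t hx; ⟨y, hy, fun hyW => hyV (hWV hyW)⟩, h.2⟩

theorem TP_mono (P : Set (Clause S)) : Monotone (TP P) :=
  fun _ _ hIJ _ ⟨r, hr, hA, hB⟩ => ⟨r, hr, hA, fun B hB' => hIJ (hB B hB')⟩

theorem monotone_iterate_TP (P : Set (Clause S)) : Monotone fun n => (TP P)^[n] ∅ :=
  (TP_mono P).monotone_iterate_of_le_map (Set.empty_subset _)

theorem isModel_iUnion_iterate_TP (P : Set (Clause S)) : IsModel P (⋃ n, (TP P)^[n] ∅) := by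
  classical
  rintro _ ⟨r, hr, rfl, hB⟩
  obtain ⟨n, hn⟩ := (monotone_iterate_TP P).directed_le.exists_mem_subset_of_finset_subset_biUnion
    (s := r.2.toFinset) fun B hB' => hB B (List.mem_toFinset.mp hB')
  refine Set.mem_iUnion.mpr ⟨n + 1, ?_⟩
  rw [Function.iterate_succ_apply']
  exact ⟨r, hr, rfl, fun B hB' => hn (List.mem_toFinset.mpr hB')⟩

theorem ind_subset_iUnion_iterate_TP (P : Set (Clause S)) : Ind P ⊆ ⋃ n, (TP P)^[n] ∅ :=
  Set.sInter_subset_of_mem (isModel_iUnion_iterate_TP P)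

theorem exists_clause_of_mem_TP {P : Set (Clause S)} {I : Set (Atom S)} {A : Atom S}
    (h : A ∈ TP P I) : ∃ C ∈ P, ∃ σc : Subst S, σc.Ground ∧ clauseVars C ⊆ σc.dom ∧
      A = C.head.subst σc ∧ ∀ B ∈ C.body, B.subst σc ∈ I := by
  obtain ⟨r, ⟨C, hC, σc, hσc, hhead, hbody, hheadGround, hbodyGround⟩, rfl, hI⟩ := h
  have hmem : ∀ B ∈ C.body, B.subst σc ∈ r.2 := fun B hB => hbody ▸ List.mem_map_of_mem hB
  refine ⟨C, hC, σc, hσc, ?_, hhead, fun B hB => hI _ (hmem B hB)⟩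
  rintro x (hx | ⟨B, hB, hx⟩)
  · exact Atom.mem_dom_of_ground_subst C.finHead (hhead ▸ hheadGround) hx
  · exact Atom.mem_dom_of_ground_subst (C.finBody B hB) (hbodyGround _ (hmem B hB)) hx

open Classical in
noncomputable def shiftRenaming (C : Clause S) (N : ℕ) : Subst S where
  toFun x := if x ∈ clauseVars C then some (Term.var S (x + N)) else none
  finDom := (clauseVars_finite C).subset fun x hx => by
    by_contra h
    simp [h] at hx

def shiftedExtension (σ σc : Subst S) (N : ℕ) : Subst S where
  toFun y := if N ≤ y then σc.toFun (y - N) else σ.toFun y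
  finDom := ((σc.finDom.image (· + N)).union σ.finDom).subset fun y hy => by
    by_cases h : N ≤ y
    · exact .inl ⟨y - N, by simpa [h] using hy, Nat.sub_add_cancel h⟩
    · exact .inr (by simpa [h] using hy)

section Shift

variable {C : Clause S} {N : ℕ}

theorem shiftRenaming_apply_of_mem {x : ℕ} (hx : x ∈ clauseVars C) :
    (shiftRenaming C N).toFun x = some (Term.var S (x + N)) :=
  if_pos hx

theorem shiftedExtension_apply_add (σ σc : Subst S) (x : ℕ) :
    (shiftedExtension σ σc N).toFun (x + N) = σc.toFun x := by
  simp [shiftedExtension]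

theorem freshRenamingFor_shiftRenaming {V : Set ℕ} (hV : ∀ z ∈ V, z < N) :
    FreshRenamingFor (shiftRenaming C N) C V := by
  refine ⟨fun x t hx => ?_, fun x hx => ?_, fun x y hxy hx => ?_⟩
  · by_cases hxC : x ∈ clauseVars C
    · rw [shiftRenaming_apply_of_mem hxC, Option.some_inj] at hx
      exact ⟨x + N, hx.symm, fun hxV => by have := hV _ hxV; omega⟩
    · simp [shiftRenaming, hxC] at hx
  · simp [Subst.dom, shiftRenaming_apply_of_mem hx]
  · by_cases hxC : x ∈ clauseVars C
    · by_cases hyC : y ∈ clauseVars C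
      · rw [shiftRenaming_apply_of_mem hxC, shiftRenaming_apply_of_mem hyC, Option.some_inj] at hxy
        have := Term.var_injective hxy
        omega
      · simp [shiftRenaming, hxC, hyC] at hxy
    · simp [shiftRenaming, hxC] at hx

theorem isFinite_subst_shiftRenaming {A : Atom S} (hA : A.IsFinite) :
    (A.subst (shiftRenaming C N)).IsFinite := by
  refine Atom.isFinite_subst (fun x s hx => ?_) hA
  obtain ⟨y, rfl, -⟩ := (freshRenamingFor_shiftRenaming (V := ∅) (fun _ h => h.elim)).1 x s hx
  exact Term.isFinite_var y

theorem le_shiftedExtension {σ : Subst S} (σc : Subst S) (hσ : ∀ z ∈ σ.dom, z < N) :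
    σ.le (shiftedExtension σ σc N) := fun x t hx => by
  have : ¬ N ≤ x := not_le.mpr (hσ x (Option.isSome_iff_exists.mpr ⟨t, hx⟩))
  simpa [shiftedExtension, this] using hx

theorem ground_shiftedExtension {σ σc : Subst S} (hσ : σ.Ground) (hσc : σc.Ground) :
    (shiftedExtension σ σc N).Ground := fun y t hy => by
  by_cases h : N ≤ y
  · exact hσc (y - N) t (by simpa [shiftedExtension, h] using hy)
  · exact hσ y t (by simpa [shiftedExtension, h] using hy)

theorem subst_shiftRenaming_shiftedExtension (σ : Subst S) {σc : Subst S}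
    (hCσc : clauseVars C ⊆ σc.dom) {A : Atom S} (hA : A.IsFinite)
    (hAC : ∀ x, A.Occurs x → x ∈ clauseVars C) :
    (A.subst (shiftRenaming C N)).subst (shiftedExtension σ σc N) = A.subst σc := by
  refine Atom.subst_subst_eq hA fun x hx => ?_
  obtain ⟨s, hs⟩ := Option.isSome_iff_exists.mp (hCσc (hAC x hx))
  rw [Term.subst_var_of_some (shiftRenaming_apply_of_mem (hAC x hx)),
    Term.subst_var_of_some ((shiftedExtension_apply_add σ σc x).trans hs),
    Term.subst_var_of_some hs]

end Shift

theorem exists_resolvent {E : Set (Eqn S)} (hE : EqnSetFin E) {σ : Subst S} (hσ : σ ∈ sol E)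
    {A : Atom S} (hA : A.IsFinite) (hAσ : ∀ x, A.Occurs x → x ∈ σ.dom)
    {C : Clause S} {σc : Subst S} (hσc : σc.Ground) (hCσc : clauseVars C ⊆ σc.dom)
    (hhead : A.subst σ = C.head.subst σc) :
    ∃ ρ θ, FreshRenamingFor ρ C σ.dom ∧ σ.le θ ∧
      θ ∈ sol (E ∪ atomEqs A (C.head.subst ρ)) ∧ EqnSetFin (E ∪ atomEqs A (C.head.subst ρ)) ∧
      (∀ B ∈ C.body.map (·.subst ρ), B.IsFinite) ∧ goalVars (C.body.map (·.subst ρ)) ⊆ θ.dom ∧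
      ∀ B ∈ C.body, (B.subst ρ).subst θ = B.subst σc := by
  obtain ⟨b, hb⟩ := σ.finDom.bddAbove
  have hN : ∀ z ∈ σ.dom, z < b + 1 := fun z hz => Nat.lt_succ_of_le (hb hz)
  set ρ := shiftRenaming C (b + 1)
  set θ := shiftedExtension σ σc (b + 1)
  have hσθ : σ.le θ := le_shiftedExtension σc hN
  have hrenamed : ∀ B : Atom S, B.IsFinite → (∀ x, B.Occurs x → x ∈ clauseVars C) →
      (B.subst ρ).IsFinite ∧ (∀ x, (B.subst ρ).Occurs x → x ∈ θ.dom) ∧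
        (B.subst ρ).subst θ = B.subst σc := by
    intro B hB hBC
    have hcomp : (B.subst ρ).subst θ = B.subst σc :=
      subst_shiftRenaming_shiftedExtension σ hCσc hB hBC
    have hground := Atom.ground_subst hσc hB fun x hx => hCσc (hBC x hx)
    exact ⟨isFinite_subst_shiftRenaming hB,
      fun x => Atom.mem_dom_of_ground_subst (isFinite_subst_shiftRenaming hB) (hcomp ▸ hground),
      hcomp⟩
  have hbody : ∀ B ∈ C.body, _ := fun B hB =>
    hrenamed B (C.finBody B hB) fun x hx => .inr ⟨B, hB, hx⟩
  obtain ⟨hHfin, hHdom, hHcomp⟩ := hrenamed C.head C.finHead fun x hx => .inl hx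
  refine ⟨ρ, θ, freshRenamingFor_shiftRenaming hN, hσθ, ?_, hE.union_atomEqs hA hHfin, ?_, ?_,
    fun B hB => (hbody B hB).2.2⟩
  · refine mem_sol_union_atomEqs (mem_sol_of_le hE hσ hσθ (ground_shiftedExtension hσ.1 hσc))
      (fun x hx => hσθ.dom_subset (hAσ x hx)) hHdom ?_
    rw [Atom.subst_eq_of_le hσθ hA hAσ, hhead, hHcomp]
  · simp only [List.mem_map]
    rintro _ ⟨B, hB, rfl⟩
    exact (hbody B hB).1
  · rintro x ⟨_, hB', hx⟩
    obtain ⟨B, hB, rfl⟩ := List.mem_map.mp hB'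
    exact (hbody B hB).2.1 x hx

def SucceedsAbove (P : Set (Clause S)) (H : Set (Atom S)) (G : List (Atom S)) (E : Set (Eqn S))
    (σ : Subst S) : Prop :=
  ∃ E' θ, EqnSetFin E' ∧ θ ∈ sol E' ∧ OpSem S P ∅ H G E E' ∧ σ.le θ

def SLDCompleteOn (P : Set (Clause S)) (I : Set (Atom S)) : Prop :=
  ∀ G E σ H, (∀ A ∈ G, A.IsFinite) → EqnSetFin E → σ ∈ sol E → goalVars G ⊆ σ.dom →
    atomsVars H ⊆ σ.dom → (∀ A ∈ G, A.subst σ ∈ I) → SucceedsAbove P H G E σ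

theorem succeedsAbove_nil (P : Set (Clause S)) (H : Set (Atom S)) {E : Set (Eqn S)}
    (hE : EqnSetFin E) {σ : Subst S} (hσ : σ ∈ sol E) : SucceedsAbove P H [] E σ :=
  ⟨E, σ, hE, hσ, .empty _ _ _ _, fun _ _ h => h⟩

theorem sldCompleteOn_empty (P : Set (Clause S)) : SLDCompleteOn P ∅ := by
  rintro (_ | ⟨A, G⟩) E σ H - hE hσ - - hI
  · exact succeedsAbove_nil P H hE hσ
  · exact (hI A List.mem_cons_self).elim

theorem SLDCompleteOn.TP {P : Set (Clause S)} {I : Set (Atom S)} (hI : SLDCompleteOn P I) :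
    SLDCompleteOn P (TP P I) := by
  intro G
  induction G with
  | nil => exact fun E σ H _ hE hσ _ _ _ => succeedsAbove_nil P H hE hσ
  | cons A G ih =>
    intro E σ H hG hE hσ hGσ hHσ hGI
    have hAσ : ∀ x, A.Occurs x → x ∈ σ.dom := fun x hx => hGσ ⟨A, List.mem_cons_self, hx⟩
    obtain ⟨C, hC, σc, hσc, hCσc, hhead, hbodyI⟩ :=
      exists_clause_of_mem_TP (hGI A List.mem_cons_self)
    obtain ⟨ρ, θ, hρ, hσθ, hθ, hE₁, hbodyFin, hbodyDom, hbody⟩ :=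
      exists_resolvent hE hσ (hG A List.mem_cons_self) hAσ hσc hCσc hhead
    have hHAθ : atomsVars (H ∪ {A}) ⊆ θ.dom := by
      rintro x ⟨B, hB | rfl, hx⟩
      exacts [hσθ.dom_subset (hHσ ⟨B, hB, hx⟩), hσθ.dom_subset (hAσ x hx)]
    obtain ⟨E₂, θ₂, hE₂, hθ₂, hbodyOp, hθθ₂⟩ :=
      hI _ _ θ (H ∪ {A}) hbodyFin hE₁ hθ hbodyDom hHAθ fun B' hB' => by
        obtain ⟨B, hB, rfl⟩ := List.mem_map.mp hB'
        exact hbody B hB ▸ hbodyI B hB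
    have hσθ₂ := hσθ.trans hθθ₂
    have hGσ' : goalVars G ⊆ σ.dom := fun x ⟨B, hB, hx⟩ =>
      hGσ ⟨B, List.mem_cons_of_mem _ hB, hx⟩
    obtain ⟨E₃, θ₃, hE₃, hθ₃, hrestOp, hθ₂θ₃⟩ :=
      ih E₂ θ₂ H (fun B hB => hG B (List.mem_cons_of_mem _ hB)) hE₂ hθ₂
        (hGσ'.trans hσθ₂.dom_subset) (hHσ.trans hσθ₂.dom_subset) fun B hB => by
          rw [Atom.subst_eq_of_le hσθ₂ (hG B (List.mem_cons_of_mem _ hB))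
            fun x hx => hGσ' ⟨B, hB, hx⟩]
          exact hGI B (List.mem_cons_of_mem _ hB)
    refine ⟨E₃, θ₃, hE₃, hθ₃, ?_, hσθ₂.trans hθ₂θ₃⟩
    exact OpSem.step (G1 := []) C ρ hC
      (hρ.mono (Set.union_subset (Set.union_subset hσ.2.1 hHσ) hGσ))
      (congrArg Atom.pred hhead :) ⟨θ, hθ⟩ hbodyOp hrestOp

theorem sldCompleteOn_iterate_TP (P : Set (Clause S)) (n : ℕ) :
    SLDCompleteOn P ((TP P)^[n] ∅) := by
  induction n with
  | zero => exact sldCompleteOn_empty P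
  | succ n ih =>
    rw [Function.iterate_succ_apply']
    exact ih.TP

end Completeness

theorem sld_completeness_wrt_inductive_semantics_general (S : Sig) (P coP : Set (Clause S))
    (A : Atom S) (hAfin : A.IsFinite)
    (E : Set (Eqn S)) (hE : EqnSetFin E)
    (σ : Subst S) (hσ : σ ∈ sol E)
    (hdom : ∀ x, Atom.Occurs x A → x ∈ σ.dom)
    (hInd : A.subst σ ∈ Ind (P ∪ coP)) :
    ∃ (E' : Set (Eqn S)) (θ : Subst S), EqnSetFin E' ∧ θ ∈ sol E' ∧
      OpSem S (P ∪ coP) ∅ ∅ [A] E E' ∧ σ.le θ := by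
  obtain ⟨n, hn⟩ := Set.mem_iUnion.mp (ind_subset_iUnion_iterate_TP _ hInd)
  refine sldCompleteOn_iterate_TP (P ∪ coP) n [A] E σ ∅ ?_ hE hσ ?_ ?_ ?_
  · simpa using hAfin
  · rintro x ⟨_, hA', hx⟩
    obtain rfl := List.mem_singleton.mp hA'
    exact hdom x hx
  · rintro x ⟨_, h, -⟩
    exact h.elim
  · simpa using hn

/-- Completeness of standard SLD resolution w.r.t. the inductive declarative semantics:
if `Aσ ∈ Ind(P ∪ coP)` then SLD resolution of `A` in `P ∪ coP` succeeds with an answer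
extending `σ`. -/
theorem sld_completeness_wrt_inductive_semantics (S : Sig) (P coP : Set (Clause S))
    (hP : P.Finite) (hcoP : coP.Finite)
    (A : Atom S) (hAfin : A.IsFinite)
    (E : Set (Eqn S)) (hE : EqnSetFin E)
    (σ : Subst S) (hσ : σ ∈ sol E)
    (hdom : ∀ x, Atom.Occurs x A → x ∈ σ.dom)
    (hInd : A.subst σ ∈ Ind (P ∪ coP)) :
    ∃ (E' : Set (Eqn S)) (θ : Subst S), EqnSetFin E' ∧ θ ∈ sol E' ∧
      OpSem S (P ∪ coP) ∅ ∅ [A] E E' ∧ σ.le θ :=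
  sld_completeness_wrt_inductive_semantics_general S P coP A hAfin E hE σ hσ hdom hInd

end FlexLP
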